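/- arXiv:1008.3628 — 3 statements merged into one kernel-verified Lean document; each statement's English description precedes it below -/
import Mathlib

section
/- For every u ∈ U, the embedding-energy second variation satisfies the identity ε Σ_{ℓ=−N+1}^{N} { G''_F[ρ'_F(u'_ℓ + u'_{ℓ+1}) + ρ'_{2F}(u'_{ℓ−1} + u'_ℓ + u'_{ℓ+1} + u'_{ℓ+2})]² + G'_F[ρ''_F(u'_ℓ)² + ρ''_{2F}(u'_ℓ + u'_{ℓ−1})² + ρ''_F(u'_{ℓ+1})² + ρ''_{2F}(u'_{ℓ+1} + u'_{ℓ+2})²] } = [4G''_F(ρ'_F + 2ρ'_{2F})² + 2G'_F(ρ''_F + 4ρ''_{2F})]‖Du‖²_{ℓ²ε} − ε²[G''_F((ρ'_F)² + 20(ρ'_{2F})² + 12ρ'_F ρ'_{2F}) + 2G'_F ρ''_{2F}]‖D²u‖²_{ℓ²ε} + ε⁴ G''_F[8(ρ'_{2F})² + 2ρ'_F ρ'_{2F}]‖D³u‖²_{ℓ²ε} − ε⁶ G''_F(ρ'_{2F})² ‖D⁴u‖²_{ℓ²ε}. -/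
open Finset

noncomputable section

/-- `u` is `2N`-periodic. -/
def IsPer (N : ℤ) (u : ℤ → ℝ) : Prop := ∀ ℓ : ℤ, u (ℓ + 2*N) = u ℓ

/-- `u` belongs to the displacement space `U`: `2N`-periodic with zero mean. -/
def InU (N : ℤ) (u : ℤ → ℝ) : Prop :=
  IsPer N u ∧ ∑ ℓ ∈ Finset.Icc (-N+1) N, u ℓ = 0

/-- the scaled reference atomic spacing `ε = 1/N`. -/
def eps (N : ℤ) : ℝ := 1 / (N : ℝ)

/-- discrete derivative `(Dv)_ℓ = (v_ℓ - v_{ℓ-1})/ε`. -/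
def Dd (N : ℤ) (v : ℤ → ℝ) : ℤ → ℝ := fun ℓ => (v ℓ - v (ℓ-1)) / eps N

/-- squared `ℓ²ε` norm: `ε Σ_{ℓ=-N+1}^{N} v_ℓ²`. -/
def nrm2 (N : ℤ) (v : ℤ → ℝ) : ℝ := eps N * ∑ ℓ ∈ Finset.Icc (-N+1) N, (v ℓ)^2

/-!
With `w = Du`, which is again `2N`-periodic, each side is `ε` times a sum over one period of
quadratic expressions in the shifts `w_{ℓ+a}`, because `ε^k D^k` is the `k`-th backward difference.
Over a full period `Σ_ℓ w_{ℓ+a} w_{ℓ+b}` depends only on `|b - a|`, so both sides are the same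
linear combination of the autocorrelations `Σ_ℓ w_ℓ w_{ℓ+k}`, `k = 0, …, 3`.
-/

open Function

theorem Function.Periodic.sum_Ico_add_one {M : Type*} [AddCancelCommMonoid M] {f : ℤ → M}
    {a b : ℤ} (hf : Periodic f (b - a)) :
    ∑ x ∈ Ico (a + 1) (b + 1), f x = ∑ x ∈ Ico a b, f x := by
  rcases lt_or_ge b a with hba | hab
  · rw [Ico_eq_empty_of_le (by omega), Ico_eq_empty_of_le hba.le]
  · have h := congrArg (∑ x ∈ ·, f x)
      ((insert_Ico_add_one_left_eq_Ico (by omega : a < b + 1)).trans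
        (insert_Ico_right_eq_Ico_add_one hab).symm)
    simp only [sum_insert (by simp : a ∉ Ico (a + 1) (b + 1)), sum_insert right_notMem_Ico] at h
    rwa [← add_sub_cancel a b, hf a, add_sub_cancel, add_left_cancel_iff] at h

theorem Function.Periodic.sum_Ico_comp_add {M : Type*} [AddCancelCommMonoid M] {f : ℤ → M}
    {a b : ℤ} (hf : Periodic f (b - a)) (c : ℤ) :
    ∑ x ∈ Ico a b, f (x + c) = ∑ x ∈ Ico a b, f x := by
  rw [sum_Ico_add']
  induction c using Int.induction_on with
  | zero => simp
  | succ i ih =>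
    rw [← ih, ← add_assoc, ← add_assoc]
    exact Periodic.sum_Ico_add_one (by rwa [add_sub_add_right_eq_sub])
  | pred i ih =>
    rw [← ih, ← Periodic.sum_Ico_add_one (a := a + (-i - 1))
      (by rwa [add_sub_add_right_eq_sub])]
    congr 2 <;> ring

theorem Function.Periodic.sum_Icc_comp_add {M : Type*} [AddCancelCommMonoid M] {N : ℤ}
    {f : ℤ → M} (hf : Periodic f (2 * N)) (c : ℤ) :
    ∑ ℓ ∈ Icc (-N + 1) N, f (ℓ + c) = ∑ ℓ ∈ Icc (-N + 1) N, f ℓ := by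
  rw [← Ico_add_one_right_eq_Icc]
  exact Periodic.sum_Ico_comp_add (by rwa [show N + 1 - (-N + 1) = 2 * N by ring]) c

def autocorr (N : ℤ) (w : ℤ → ℝ) (k : ℤ) : ℝ :=
  ∑ ℓ ∈ Icc (-N + 1) N, w ℓ * w (ℓ + k)

section Correlation

variable {N : ℤ} {w : ℤ → ℝ}

theorem Function.Periodic.sum_mul_comp_add (hw : Periodic w (2 * N)) (a b : ℤ) :
    ∑ ℓ ∈ Icc (-N + 1) N, w (ℓ + a) * w (ℓ + b) = autocorr N w (b - a) := by
  have hf : Periodic (fun ℓ => w ℓ * w (ℓ + (b - a))) (2 * N) := hw.mul (hw.add_const _)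
  rw [autocorr, ← hf.sum_Icc_comp_add a]
  simp only [add_assoc, add_sub_cancel]

theorem Function.Periodic.autocorr_neg (hw : Periodic w (2 * N)) (k : ℤ) :
    autocorr N w (-k) = autocorr N w k := by
  rw [← zero_sub, ← hw.sum_mul_comp_add k 0, autocorr]
  simp only [add_zero, mul_comm]

theorem Function.Periodic.sum_sq_stencil (hw : Periodic w (2 * N)) {ι : Type*} (s : Finset ι)
    (c : ι → ℝ) (o : ι → ℤ) :
    ∑ ℓ ∈ Icc (-N + 1) N, (∑ i ∈ s, c i * w (ℓ + o i)) ^ 2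
      = ∑ i ∈ s, ∑ j ∈ s, c i * c j * autocorr N w (o j - o i) := by
  simp_rw [sq, sum_mul_sum]
  rw [sum_comm]
  refine sum_congr rfl fun i _ => ?_
  rw [sum_comm]
  refine sum_congr rfl fun j _ => ?_
  rw [← hw.sum_mul_comp_add, mul_sum]
  exact sum_congr rfl fun ℓ _ => by ring

theorem Function.Periodic.sum_sq_bdiff₁ (hw : Periodic w (2 * N)) :
    ∑ ℓ ∈ Icc (-N + 1) N, (w ℓ - w (ℓ - 1)) ^ 2
      = 2 * autocorr N w 0 - 2 * autocorr N w 1 := by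
  have h := hw.sum_sq_stencil univ ![1, -1] ![0, -1]
  simp only [Fin.sum_univ_two, Matrix.cons_val, Int.reduceNeg, Int.reduceSub, hw.autocorr_neg]
    at h
  convert h using 1
  · exact sum_congr rfl fun ℓ _ => by ring_nf
  · ring

theorem Function.Periodic.sum_sq_bdiff₂ (hw : Periodic w (2 * N)) :
    ∑ ℓ ∈ Icc (-N + 1) N, (w ℓ - 2 * w (ℓ - 1) + w (ℓ - 2)) ^ 2
      = 6 * autocorr N w 0 - 8 * autocorr N w 1 + 2 * autocorr N w 2 := by
  have h := hw.sum_sq_stencil univ ![1, -2, 1] ![0, -1, -2]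
  simp only [Fin.sum_univ_three, Matrix.cons_val, Int.reduceNeg, Int.reduceSub, hw.autocorr_neg]
    at h
  convert h using 1
  · exact sum_congr rfl fun ℓ _ => by ring_nf
  · ring

theorem Function.Periodic.sum_sq_bdiff₃ (hw : Periodic w (2 * N)) :
    ∑ ℓ ∈ Icc (-N + 1) N, (w ℓ - 3 * w (ℓ - 1) + 3 * w (ℓ - 2) - w (ℓ - 3)) ^ 2
      = 20 * autocorr N w 0 - 30 * autocorr N w 1 + 12 * autocorr N w 2 - 2 * autocorr N w 3 := by
  have h := hw.sum_sq_stencil univ ![1, -3, 3, -1] ![0, -1, -2, -3]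
  simp only [Fin.sum_univ_four, Matrix.cons_val, Int.reduceNeg, Int.reduceSub, hw.autocorr_neg]
    at h
  convert h using 1
  · exact sum_congr rfl fun ℓ _ => by ring_nf
  · ring

theorem Function.Periodic.sum_sq_density_variation (hw : Periodic w (2 * N)) (a b : ℝ) :
    ∑ ℓ ∈ Icc (-N + 1) N,
      (a * (w ℓ + w (ℓ + 1)) + b * (w (ℓ - 1) + w ℓ + w (ℓ + 1) + w (ℓ + 2))) ^ 2
      = 2 * (b ^ 2 + (a + b) ^ 2) * autocorr N w 0
        + 2 * (2 * b * (a + b) + (a + b) ^ 2) * autocorr N w 1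
        + 4 * b * (a + b) * autocorr N w 2 + 2 * b ^ 2 * autocorr N w 3 := by
  have h := hw.sum_sq_stencil univ ![b, a + b, a + b, b] ![-1, 0, 1, 2]
  simp only [Fin.sum_univ_four, Matrix.cons_val, Int.reduceNeg, Int.reduceSub, hw.autocorr_neg]
    at h
  convert h using 1
  · exact sum_congr rfl fun ℓ _ => by ring_nf
  · ring

theorem Function.Periodic.sum_density_second_variation (hw : Periodic w (2 * N)) (a b : ℝ) :
    ∑ ℓ ∈ Icc (-N + 1) N, (a * w ℓ ^ 2 + b * (w ℓ + w (ℓ - 1)) ^ 2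
        + a * w (ℓ + 1) ^ 2 + b * (w (ℓ + 1) + w (ℓ + 2)) ^ 2)
      = 2 * (a + 2 * b) * autocorr N w 0 + 4 * b * autocorr N w 1 := by
  have h₀ := hw.sum_sq_stencil univ ![1] ![0]
  have h₁ := hw.sum_sq_stencil univ ![1, 1] ![0, -1]
  have h₂ := hw.sum_sq_stencil univ ![1] ![1]
  have h₃ := hw.sum_sq_stencil univ ![1, 1] ![1, 2]
  simp only [Fin.sum_univ_one, Fin.sum_univ_two, Matrix.cons_val, Int.reduceNeg, Int.reduceSub,
    hw.autocorr_neg] at h₀ h₁ h₂ h₃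
  simp only [sum_add_distrib, ← mul_sum]
  linear_combination (norm := ring_nf) a * h₀ + b * h₁ + a * h₂ + b * h₃

end Correlation

theorem Dd_apply (N : ℤ) (v : ℤ → ℝ) (ℓ : ℤ) : Dd N v ℓ = N * (v ℓ - v (ℓ - 1)) := by
  rw [Dd, eps, div_div_eq_mul_div, div_one, mul_comm]

theorem Dd_Dd_apply (N : ℤ) (v : ℤ → ℝ) (ℓ : ℤ) :
    Dd N (Dd N v) ℓ = N ^ 2 * (v ℓ - 2 * v (ℓ - 1) + v (ℓ - 2)) := by
  simp only [Dd_apply, sub_sub, Int.reduceAdd]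
  ring

theorem Dd_Dd_Dd_apply (N : ℤ) (v : ℤ → ℝ) (ℓ : ℤ) :
    Dd N (Dd N (Dd N v)) ℓ = N ^ 3 * (v ℓ - 3 * v (ℓ - 1) + 3 * v (ℓ - 2) - v (ℓ - 3)) := by
  simp only [Dd_apply, sub_sub, Int.reduceAdd]
  ring

theorem Function.Periodic.Dd {N : ℤ} {v : ℤ → ℝ} {c : ℤ} (hv : Periodic v c) :
    Periodic (Dd N v) c :=
  fun ℓ => by
    simp only [_root_.Dd, hv ℓ, show v (ℓ + c - 1) = v (ℓ - 1) from hv.sub_const 1 ℓ]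

theorem nrm2_eq_of_eq_mul {N : ℤ} {v f : ℤ → ℝ} (c : ℝ) (h : ∀ ℓ, v ℓ = c * f ℓ) :
    nrm2 N v = c ^ 2 * (eps N * ∑ ℓ ∈ Icc (-N + 1) N, f ℓ ^ 2) := by
  simp only [nrm2, h, mul_pow, ← mul_sum]
  ring

theorem nrm2_eq_eps_mul_autocorr_zero (N : ℤ) (w : ℤ → ℝ) :
    nrm2 N w = eps N * autocorr N w 0 := by
  simp only [nrm2, autocorr, add_zero, sq]

theorem embedding_second_variation_general (N : ℤ) (hN : 1 ≤ N)
    (rF r2F rrF rr2F g1 g2 : ℝ) (u : ℤ → ℝ) (hu : InU N u) :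
    eps N * ∑ ℓ ∈ Finset.Icc (-N+1) N,
      (g2 * (rF * (Dd N u ℓ + Dd N u (ℓ+1))
          + r2F * (Dd N u (ℓ-1) + Dd N u ℓ + Dd N u (ℓ+1) + Dd N u (ℓ+2)))^2
       + g1 * (rrF * (Dd N u ℓ)^2 + rr2F * (Dd N u ℓ + Dd N u (ℓ-1))^2
             + rrF * (Dd N u (ℓ+1))^2 + rr2F * (Dd N u (ℓ+1) + Dd N u (ℓ+2))^2))
    = (4*g2*(rF + 2*r2F)^2 + 2*g1*(rrF + 4*rr2F)) * nrm2 N (Dd N u)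
      - (eps N)^2 * (g2*(rF^2 + 20*r2F^2 + 12*rF*r2F) + 2*g1*rr2F)
          * nrm2 N (Dd N (Dd N u))
      + (eps N)^4 * (g2*(8*r2F^2 + 2*rF*r2F)) * nrm2 N (Dd N (Dd N (Dd N u)))
      - (eps N)^6 * (g2*r2F^2) * nrm2 N (Dd N (Dd N (Dd N (Dd N u)))) := by
  have hw : Periodic (Dd N u) (2 * N) := Periodic.Dd hu.1
  have hN₀ : (N : ℝ) ≠ 0 := by exact_mod_cast (by omega : N ≠ 0)
  rw [sum_add_distrib, ← mul_sum, ← mul_sum, hw.sum_sq_density_variation,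
    hw.sum_density_second_variation, nrm2_eq_eps_mul_autocorr_zero,
    nrm2_eq_of_eq_mul _ (Dd_apply N (Dd N u)), nrm2_eq_of_eq_mul _ (Dd_Dd_apply N (Dd N u)),
    nrm2_eq_of_eq_mul _ (Dd_Dd_Dd_apply N (Dd N u)), hw.sum_sq_bdiff₁, hw.sum_sq_bdiff₂,
    hw.sum_sq_bdiff₃]
  rw [eps]
  field_simp
  ring

/-- the embedding-energy second variation identity. -/
theorem embedding_second_variation (N : ℤ) (hN : 1 ≤ N)
    (pF p2F rF r2F rrF rr2F g1 g2 : ℝ) (u : ℤ → ℝ) (hu : InU N u) :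
    eps N * ∑ ℓ ∈ Finset.Icc (-N+1) N,
      (g2 * (rF * (Dd N u ℓ + Dd N u (ℓ+1))
          + r2F * (Dd N u (ℓ-1) + Dd N u ℓ + Dd N u (ℓ+1) + Dd N u (ℓ+2)))^2
       + g1 * (rrF * (Dd N u ℓ)^2 + rr2F * (Dd N u ℓ + Dd N u (ℓ-1))^2
             + rrF * (Dd N u (ℓ+1))^2 + rr2F * (Dd N u (ℓ+1) + Dd N u (ℓ+2))^2))
    = (4*g2*(rF + 2*r2F)^2 + 2*g1*(rrF + 4*rr2F)) * nrm2 N (Dd N u)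
      - (eps N)^2 * (g2*(rF^2 + 20*r2F^2 + 12*rF*r2F) + 2*g1*rr2F)
          * nrm2 N (Dd N (Dd N u))
      + (eps N)^4 * (g2*(8*r2F^2 + 2*rF*r2F)) * nrm2 N (Dd N (Dd N (Dd N u)))
      - (eps N)^6 * (g2*r2F^2) * nrm2 N (Dd N (Dd N (Dd N (Dd N u)))) :=
  embedding_second_variation_general N hN rF r2F rrF rr2F g1 g2 u hu
end
end

section
/- The quadratic form Q^a is positive definite on U (i.e., Q^a(u) > 0 for every u ∈ U with u ≠ 0) if and only if λ_F(4 sin²(π/(2N))) > 0. -/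
open Finset

noncomputable section

/-- the atomistic second-variation quadratic form `Q^a`. -/
def Qa (N : ℤ) (pF p2F rF r2F rrF rr2F g1 g2 : ℝ) (u : ℤ → ℝ) : ℝ :=
  eps N * ∑ ℓ ∈ Finset.Icc (-N+1) N,
    (g2 * (rF * (Dd N u ℓ + Dd N u (ℓ+1))
        + r2F * (Dd N u (ℓ-1) + Dd N u ℓ + Dd N u (ℓ+1) + Dd N u (ℓ+2)))^2
     + g1 * (rrF * (Dd N u ℓ)^2 + rr2F * (Dd N u ℓ + Dd N u (ℓ-1))^2
           + rrF * (Dd N u (ℓ+1))^2 + rr2F * (Dd N u (ℓ+1) + Dd N u (ℓ+2))^2)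
     + (1/2) * (pF * ((Dd N u ℓ)^2 + (Dd N u (ℓ+1))^2)
           + p2F * ((Dd N u ℓ + Dd N u (ℓ-1))^2 + (Dd N u (ℓ+1) + Dd N u (ℓ+2))^2)))

/-- `Ã_F = φ''_F + 4φ''_{2F}`. -/
def Atil (pF p2F : ℝ) : ℝ := pF + 4*p2F

/-- `Â_F = 4G''_F(ρ'_F+2ρ'_{2F})² + 2G'_F(ρ''_F+4ρ''_{2F})`. -/
def Ahat (rF r2F rrF rr2F g1 g2 : ℝ) : ℝ := 4*g2*(rF + 2*r2F)^2 + 2*g1*(rrF + 4*rr2F)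

/-- `A_F = Â_F + Ã_F`. -/
def AFc (pF p2F rF r2F rrF rr2F g1 g2 : ℝ) : ℝ := Ahat rF r2F rrF rr2F g1 g2 + Atil pF p2F

/-- `B_F`. -/
def BFc (p2F rF r2F rr2F g1 g2 : ℝ) : ℝ :=
  -(p2F + g2*(rF^2 + 20*r2F^2 + 12*rF*r2F) + 2*g1*rr2F)

/-- `C_F`. -/
def CFc (rF r2F g2 : ℝ) : ℝ := g2*(8*r2F^2 + 2*rF*r2F)

/-- `D_F`. -/
def DFc (r2F g2 : ℝ) : ℝ := -(g2*r2F^2)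

/-- `λ_F(s) = A_F + B_F s + C_F s² + D_F s³`. -/
def lamF (pF p2F rF r2F rrF rr2F g1 g2 s : ℝ) : ℝ :=
  AFc pF p2F rF r2F rrF rr2F g1 g2 + BFc p2F rF r2F rr2F g1 g2 * s
    + CFc rF r2F g2 * s^2 + DFc r2F g2 * s^3

/-! Transport `u ∈ U` to a zero-mean function on `ZMod (2N)`. There the discrete Fourier transform
diagonalises `Q^a`: by Parseval, `Q^a(u) = ε/(2N) Σ_k λ_F(s_k) |𝓕(Du)(k)|²` with
`s_k = 2 - 2 cos(πk/N)`, the symbol of the discrete negative Laplacian. The zero mode of `Du`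
vanishes and (H1)–(H2) make `λ_F` nondecreasing on `[0, 4]`, so
`Q^a(u) ≥ ε λ_F(s_1) ‖Du‖²` with `s_1 = 4 sin²(π/(2N))`. Conversely `u_ℓ = cos(πℓ/N)` lies
in `U` and, being a Laplacian eigenfunction, has `Q^a(u) = ε λ_F(s_1) ‖Du‖²`. -/

section Symbol

variable {pF p2F rF r2F rrF rr2F g1 g2 : ℝ}

lemma lamF_eq (s : ℝ) :
    lamF pF p2F rF r2F rrF rr2F g1 g2 s =
      (pF + 2 * g1 * rrF) + (p2F + 2 * g1 * rr2F) * (4 - s)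
        + g2 * (rF + r2F * (2 - s)) ^ 2 * (4 - s) := by
  simp only [lamF, AFc, BFc, CFc, DFc, Ahat, Atil]
  ring

lemma monotoneOn_lamF (hr : 0 ≤ rF * r2F) (hg2 : 0 ≤ g2)
    (hB : 0 ≤ BFc p2F rF r2F rr2F g1 g2) :
    MonotoneOn (lamF pF p2F rF r2F rrF rr2F g1 g2) (Set.Icc 0 4) := by
  rintro s ⟨hs0, hs4⟩ t ⟨ht0, ht4⟩ hst
  have hquad : s ^ 2 + s * t + t ^ 2 ≤ 8 * (s + t) := by nlinarith
  have hcubic : 0 ≤ g2 * (r2F ^ 2 * (8 * (s + t) - (s ^ 2 + s * t + t ^ 2))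
      + 2 * (rF * r2F) * (s + t)) :=
    mul_nonneg hg2 (by nlinarith [sq_nonneg r2F])
  have hdiff : lamF pF p2F rF r2F rrF rr2F g1 g2 t - lamF pF p2F rF r2F rrF rr2F g1 g2 s
      = (t - s) * (BFc p2F rF r2F rr2F g1 g2 + g2 * (r2F ^ 2 * (8 * (s + t)
          - (s ^ 2 + s * t + t ^ 2)) + 2 * (rF * r2F) * (s + t))) := by
    simp only [lamF, CFc, DFc]
    ring
  nlinarith [mul_nonneg (sub_nonneg.2 hst) (add_nonneg hB hcubic)]

end Symbol

section Lattice

variable {R : Type*} [Ring R]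

def bwdDiff (e : ℝ) (v : R → ℝ) (x : R) : ℝ := (v x - v (x - 1)) / e

def pairSum (v : R → ℝ) (x : R) : ℝ := v x + v (x + 1)

-- The linearised electron density `ρ'_F (v_x + v_{x+1}) + ρ'_{2F} (v_{x-1} + ⋯ + v_{x+2})`.
def linDensity (a b : ℝ) (v : R → ℝ) (x : R) : ℝ :=
  a * pairSum v x + b * (pairSum v (x - 1) + pairSum v (x + 1))

-- `Qa N … u = eps N * ∑ ℓ ∈ Icc (-N+1) N, qaDensity … (Dd N u) ℓ` holds by `rfl`.
def qaDensity (pF p2F rF r2F rrF rr2F g1 g2 : ℝ) (v : R → ℝ) (x : R) : ℝ :=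
  g2 * (rF * (v x + v (x+1)) + r2F * (v (x-1) + v x + v (x+1) + v (x+2)))^2
    + g1 * (rrF * (v x)^2 + rr2F * (v x + v (x-1))^2
          + rrF * (v (x+1))^2 + rr2F * (v (x+1) + v (x+2))^2)
    + (1/2) * (pF * ((v x)^2 + (v (x+1))^2)
          + p2F * ((v x + v (x-1))^2 + (v (x+1) + v (x+2))^2))

def IsLapEigen (s : ℝ) (v : R → ℝ) : Prop := ∀ x, 2 * v x - v (x - 1) - v (x + 1) = s * v x

variable (pF p2F rF r2F rrF rr2F g1 g2 : ℝ)

lemma qaDensity_comp {S : Type*} [Ring S] (φ : S →+* R) (v : R → ℝ) (x : S) :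
    qaDensity pF p2F rF r2F rrF rr2F g1 g2 (v ∘ φ) x
      = qaDensity pF p2F rF r2F rrF rr2F g1 g2 v (φ x) := by
  simp only [qaDensity, Function.comp_apply, map_add, map_sub, map_one, map_ofNat]

lemma qaDensity_eq (v : R → ℝ) (x : R) :
    qaDensity pF p2F rF r2F rrF rr2F g1 g2 v x
      = g2 * linDensity rF r2F v x ^ 2
        + (p2F + 2 * g1 * rr2F) / 2 * (pairSum v (x - 1) ^ 2 + pairSum v (x + 1) ^ 2)
        + (pF + 2 * g1 * rrF) / 2 * (v x ^ 2 + v (x + 1) ^ 2) := by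
  simp only [qaDensity, linDensity, pairSum, sub_add_cancel, add_assoc, one_add_one_eq_two]
  ring

section Finite

variable [Fintype R]

lemma sum_comp_add_right {M : Type*} [AddCommMonoid M] (f : R → M) (c : R) :
    ∑ x, f (x + c) = ∑ x, f x :=
  Equiv.sum_comp (Equiv.addRight c) f

lemma sum_qaDensity (v : R → ℝ) :
    ∑ x, qaDensity pF p2F rF r2F rrF rr2F g1 g2 v x
      = (pF + 2 * g1 * rrF) * ∑ x, v x ^ 2
        + (p2F + 2 * g1 * rr2F) * ∑ x, pairSum v x ^ 2
        + g2 * ∑ x, linDensity rF r2F v x ^ 2 := by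
  simp only [qaDensity_eq, sum_add_distrib, ← mul_sum, sub_eq_add_neg,
    sum_comp_add_right (fun x => pairSum v x ^ 2), sum_comp_add_right (fun x => v x ^ 2)]
  ring

lemma sum_bwdDiff (e : ℝ) (v : R → ℝ) : ∑ x, bwdDiff e v x = 0 := by
  have hshift := sum_comp_add_right v (-1)
  simp only [← sub_eq_add_neg] at hshift
  simp only [bwdDiff, ← sum_div, sum_sub_distrib, hshift, sub_self, zero_div]

end Finite

variable {pF p2F rF r2F rrF rr2F g1 g2}

namespace IsLapEigen

variable {s : ℝ} {v : R → ℝ}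

lemma pairSum (hv : IsLapEigen s v) : IsLapEigen s (pairSum v) := by
  intro x
  have h := hv (x + 1)
  simp only [add_sub_cancel_right] at h
  simp only [_root_.pairSum, sub_add_cancel]
  linarith [hv x]

lemma bwdDiff (e : ℝ) (hv : IsLapEigen s v) : IsLapEigen s (bwdDiff e v) := by
  intro x
  have h := hv (x - 1)
  simp only [sub_add_cancel] at h
  simp only [_root_.bwdDiff, add_sub_cancel_right, div_eq_mul_inv]
  linear_combination e⁻¹ * hv x - e⁻¹ * h

lemma linDensity (hv : IsLapEigen s v) (a b : ℝ) (x : R) :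
    _root_.linDensity a b v x = (a + b * (2 - s)) * _root_.pairSum v x := by
  have := hv.pairSum x
  simp only [_root_.linDensity]
  linear_combination -b * this

variable [Fintype R]

lemma sum_pairSum_sq (hv : IsLapEigen s v) :
    ∑ x, _root_.pairSum v x ^ 2 = (4 - s) * ∑ x, v x ^ 2 := by
  have hcross : ∑ x, v (x + 1) * v x = ∑ x, v x * v (x - 1) := by
    simpa using sum_comp_add_right (fun x => v x * v (x - 1)) 1
  have heig : ∑ x, (v x * v (x + 1) + v x * v (x - 1)) = (2 - s) * ∑ x, v x ^ 2 := by
    rw [mul_sum]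
    exact sum_congr rfl fun x _ => by linear_combination (-v x) * hv x
  calc ∑ x, _root_.pairSum v x ^ 2
      = ∑ x, v x ^ 2 + ∑ x, v (x + 1) ^ 2
          + (∑ x, v x * v (x + 1) + ∑ x, v (x + 1) * v x) := by
        simp only [_root_.pairSum, ← sum_add_distrib]
        exact sum_congr rfl fun x _ => by ring
    _ = (4 - s) * ∑ x, v x ^ 2 := by
        rw [hcross, sum_comp_add_right (fun x => v x ^ 2), ← sum_add_distrib (s := univ)
          (f := fun x => v x * v (x + 1)), heig]
        ring

lemma sum_qaDensity (hv : IsLapEigen s v) :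
    ∑ x, qaDensity pF p2F rF r2F rrF rr2F g1 g2 v x
      = lamF pF p2F rF r2F rrF rr2F g1 g2 s * ∑ x, v x ^ 2 := by
  simp only [_root_.sum_qaDensity, hv.linDensity, mul_pow, ← mul_sum, hv.sum_pairSum_sq,
    lamF_eq]
  ring

end IsLapEigen

end Lattice

lemma Real.cos_le_cos_of_le_of_le_two_pi_sub {a x : ℝ} (ha : 0 ≤ a) (hax : a ≤ x)
    (hxa : x ≤ 2 * Real.pi - a) : Real.cos x ≤ Real.cos a := by
  rcases le_total x Real.pi with hx | hx
  · exact Real.cos_le_cos_of_nonneg_of_le_pi ha hx hax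
  · rw [← Real.cos_two_pi_sub x]
    exact Real.cos_le_cos_of_nonneg_of_le_pi ha (by linarith) (by linarith)

lemma Function.Periodic.map_intCast_val {α : Type*} {f : ℤ → α} {n : ℕ} [NeZero n]
    (hf : Function.Periodic f n) (ℓ : ℤ) : f ((ℓ : ZMod n).val) = f ℓ := by
  rw [ZMod.val_intCast, Int.emod_def, mul_comm]
  simpa using hf.sub_int_mul_eq (ℓ / n)

namespace ZMod

open scoped Real ComplexConjugate

variable {n : ℕ} [NeZero n]

lemma sum_Ioc_intCast {M : Type*} [AddCommMonoid M] (g : ZMod n → M)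
    (a : ℤ) : ∑ ℓ ∈ Ioc a (a + n), g ℓ = ∑ x, g x := by
  have hinj : Set.InjOn (Int.cast : ℤ → ZMod n) (Ioc a (a + n)) := by
    intro ℓ hℓ m hm h
    simp only [coe_Ioc, Set.mem_Ioc] at hℓ hm
    have := Int.eq_zero_of_abs_lt_dvd ((intCast_eq_intCast_iff_dvd_sub ℓ m n).1 h)
      (by rw [abs_lt]; omega)
    omega
  have himage : (Ioc a (a + n)).image (Int.cast : ℤ → ZMod n) = univ :=
    eq_univ_of_card _ (by rw [card_image_of_injOn hinj, Int.card_Ioc, ZMod.card]; omega)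
  rw [← sum_image hinj, himage]

lemma dft_comp_add_right {E : Type*} [AddCommGroup E] [Module ℂ E] (Φ : ZMod n → E)
    (c k : ZMod n) : 𝓕 (fun j => Φ (j + c)) k = stdAddChar (c * k) • 𝓕 Φ k := by
  simp only [dft_apply, smul_sum, smul_smul, ← AddChar.map_add_eq_mul]
  rw [← Equiv.sum_comp (Equiv.addRight c) (fun j => stdAddChar (c * k + -(j * k)) • Φ j)]
  simp only [Equiv.coe_addRight]
  exact sum_congr rfl fun j _ => by ring_nf

lemma sum_normSq_dft (Φ : ZMod n → ℂ) :
    ∑ k, Complex.normSq (𝓕 Φ k) = n * ∑ j, Complex.normSq (Φ j) := by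
  have horth : ∀ j m : ZMod n,
      ∑ k, stdAddChar (k * (m - j)) = if j = m then (n : ℂ) else 0 := by
    intro j m
    rw [AddChar.sum_mulShift _ (isPrimitive_stdAddChar n), ZMod.card]
    simp only [sub_eq_zero, eq_comm (a := m)]
    split_ifs <;> simp
  apply Complex.ofReal_injective
  push_cast
  simp only [← Complex.mul_conj, dft_apply, smul_eq_mul, map_sum, map_mul, sum_mul_sum,
    ← AddChar.map_neg_eq_conj]
  rw [sum_comm, mul_sum]
  refine sum_congr rfl fun j _ => ?_
  rw [sum_comm]
  have hinner : ∀ m : ZMod n,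
      ∑ k : ZMod n, stdAddChar (-(j * k)) * Φ j * (stdAddChar (- -(m * k)) * conj (Φ m))
        = Φ j * conj (Φ m) * ∑ k, stdAddChar (k * (m - j)) := fun m => by
    rw [mul_sum]
    refine sum_congr rfl fun k _ => ?_
    rw [show k * (m - j) = -(j * k) + - -(m * k) by ring, AddChar.map_add_eq_mul]
    ring
  simp only [hinner, horth, mul_ite, mul_zero, sum_ite_eq, mem_univ, if_true]
  ring

lemma sum_sq_eq_sum_normSq_dft (f : ZMod n → ℝ) :
    ∑ x, f x ^ 2 = (n : ℝ)⁻¹ * ∑ k, Complex.normSq (𝓕 (fun x => (f x : ℂ)) k) := by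
  rw [sum_normSq_dft, inv_mul_cancel_left₀ (NeZero.ne' (n : ℝ)).symm]
  simp only [Complex.normSq_ofReal, sq]

lemma re_stdAddChar (k : ZMod n) : (stdAddChar k).re = Real.cos (2 * π * k.val / n) := by
  rw [stdAddChar_apply, toCircle_apply, ← Complex.exp_ofReal_mul_I_re]
  congr 2
  push_cast
  ring

lemma stdAddChar_neg_add (k : ZMod n) :
    stdAddChar (-k) + stdAddChar k = (2 * (stdAddChar k).re : ℝ) := by
  rw [AddChar.map_neg_eq_conj, add_comm, Complex.add_conj]

lemma normSq_one_add_stdAddChar (k : ZMod n) :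
    Complex.normSq (1 + stdAddChar k) = 2 + 2 * (stdAddChar k).re := by
  rw [Complex.normSq_add, stdAddChar_apply, Circle.normSq_coe, map_one, one_mul,
    Complex.conj_re]
  ring

lemma re_stdAddChar_le {k : ZMod n} (hk : k ≠ 0) :
    (stdAddChar k).re ≤ Real.cos (2 * π / n) := by
  have hpos : 1 ≤ k.val := Nat.one_le_iff_ne_zero.2 ((val_ne_zero k).2 hk)
  have hlt : k.val + 1 ≤ n := val_lt k
  have hn : (0 : ℝ) < n := Nat.cast_pos.2 (NeZero.pos n)
  rw [re_stdAddChar]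
  apply Real.cos_le_cos_of_le_of_le_two_pi_sub (by positivity)
  · have : (1 : ℝ) ≤ k.val := by exact_mod_cast hpos
    rw [div_le_div_iff_of_pos_right hn]
    nlinarith [Real.pi_pos]
  · rw [div_le_iff₀ hn, sub_mul, div_mul_cancel₀ _ hn.ne']
    have : (k.val : ℝ) + 1 ≤ n := by exact_mod_cast hlt
    nlinarith [Real.pi_pos]

lemma bwdDiff_ne_zero {e : ℝ} (he : e ≠ 0) {v : ZMod n → ℝ} (hv : ∑ x, v x = 0)
    (hv0 : v ≠ 0) : bwdDiff e v ≠ 0 := by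
  intro hD
  have hstep : ∀ x, v x = v (x - 1) := fun x => by
    simpa [bwdDiff, he, sub_eq_zero] using congrFun hD x
  have hconst : ∀ m : ℕ, v m = v 0 := fun m => by
    induction m with
    | zero => simp
    | succ m ih => rw [hstep, Nat.cast_succ, add_sub_cancel_right, ih]
  have hall : ∀ x, v x = v 0 := fun x => by rw [← natCast_zmod_val x, hconst]
  have hn0 : (n : ℝ) ≠ 0 := Nat.cast_ne_zero.2 (NeZero.ne n)
  have h0 : v 0 = 0 := by
    simp only [hall, sum_const, card_univ, ZMod.card, nsmul_eq_mul] at hv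
    exact (mul_eq_zero.1 hv).resolve_left hn0
  exact hv0 (funext fun x => by rw [hall, h0, Pi.zero_apply])

lemma re_stdAddChar_one : (stdAddChar (1 : ZMod n)).re = Real.cos (2 * π / n) := by
  rw [← Int.cast_one, stdAddChar_coe (N := n), ← Complex.exp_ofReal_mul_I_re]
  congr 2
  push_cast
  ring

lemma sum_re_stdAddChar (hn : 1 < n) : ∑ x : ZMod n, (stdAddChar x).re = 0 := by
  have hψ : (stdAddChar : AddChar (ZMod n) ℂ) ≠ 1 := fun h1 => by
    have h10 : stdAddChar (1 : ZMod n) = stdAddChar (0 : ZMod n) := by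
      rw [h1, AddChar.one_apply, AddChar.map_zero_eq_one]
    exact hn.ne' (one_eq_zero_iff.1 (injective_stdAddChar h10))
  rw [← Complex.re_sum, AddChar.sum_eq_zero_of_ne_one hψ, Complex.zero_re]

lemma isLapEigen_re_stdAddChar :
    IsLapEigen (2 - 2 * Real.cos (2 * π / n)) (fun x : ZMod n => (stdAddChar x).re) := by
  intro x
  have h : stdAddChar (x - 1) + stdAddChar (x + 1)
      = (stdAddChar (-1 : ZMod n) + stdAddChar (1 : ZMod n)) * stdAddChar x := by
    rw [sub_eq_add_neg, AddChar.map_add_eq_mul, AddChar.map_add_eq_mul]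
    ring
  rw [stdAddChar_neg_add, re_stdAddChar_one] at h
  have hre := congrArg Complex.re h
  simp only [Complex.add_re, Complex.re_ofReal_mul] at hre
  linarith

section Form

variable (pF p2F rF r2F rrF rr2F g1 g2 : ℝ)

lemma sum_qaDensity_eq_sum_dft (v : ZMod n → ℝ) :
    ∑ x, qaDensity pF p2F rF r2F rrF rr2F g1 g2 v x
      = (n : ℝ)⁻¹ * ∑ k, lamF pF p2F rF r2F rrF rr2F g1 g2 (2 - 2 * (stdAddChar k).re)
          * Complex.normSq (𝓕 (fun x => (v x : ℂ)) k) := by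
  have hpair : ∀ k, 𝓕 (fun x => (pairSum v x : ℂ)) k
      = (1 + stdAddChar k) * 𝓕 (fun x => (v x : ℂ)) k := by
    intro k
    have : (fun x => (pairSum v x : ℂ))
        = (fun x => (v x : ℂ)) + fun x => (v (x + 1) : ℂ) := by
      ext x; simp [pairSum]
    rw [this, map_add, Pi.add_apply, dft_comp_add_right (fun x => (v x : ℂ)), one_mul,
      smul_eq_mul]
    ring
  have hlin : ∀ k, 𝓕 (fun x => (linDensity rF r2F v x : ℂ)) k
      = ((rF + 2 * r2F * (stdAddChar k).re : ℝ) : ℂ)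
          * 𝓕 (fun x => (pairSum v x : ℂ)) k := by
    intro k
    have : (fun x => (linDensity rF r2F v x : ℂ))
        = (rF : ℂ) • (fun x => (pairSum v x : ℂ)) + (r2F : ℂ) •
          ((fun x => (pairSum v (x + -1) : ℂ)) + fun x => (pairSum v (x + 1) : ℂ)) := by
      ext x; simp [linDensity, sub_eq_add_neg, mul_add]
    rw [this, map_add, dft_const_smul, dft_const_smul, map_add]
    simp only [Pi.add_apply, Pi.smul_apply, smul_eq_mul,
      dft_comp_add_right (fun x => (pairSum v x : ℂ)), neg_one_mul, one_mul]
    rw [← add_mul (stdAddChar (-k)), stdAddChar_neg_add]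
    push_cast
    ring
  rw [sum_qaDensity, sum_sq_eq_sum_normSq_dft v, sum_sq_eq_sum_normSq_dft (pairSum v),
    sum_sq_eq_sum_normSq_dft (linDensity rF r2F v)]
  simp only [hlin, hpair, Complex.normSq_mul, Complex.normSq_ofReal, normSq_one_add_stdAddChar,
    lamF_eq, mul_sum, ← sum_add_distrib]
  exact sum_congr rfl fun k _ => by ring

variable {pF p2F rF r2F rrF rr2F g1 g2}

lemma lamF_mul_sum_sq_le_sum_qaDensity
    (hmono : MonotoneOn (lamF pF p2F rF r2F rrF rr2F g1 g2) (Set.Icc 0 4))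
    {v : ZMod n → ℝ} (hv : ∑ x, v x = 0) :
    lamF pF p2F rF r2F rrF rr2F g1 g2 (2 - 2 * Real.cos (2 * π / n)) * ∑ x, v x ^ 2
      ≤ ∑ x, qaDensity pF p2F rF r2F rrF rr2F g1 g2 v x := by
  have hIcc : ∀ k : ZMod n, 2 - 2 * (stdAddChar k).re ∈ Set.Icc 0 4 := fun k => by
    rw [re_stdAddChar]
    constructor <;> linarith [Real.cos_le_one (2 * π * k.val / n),
      Real.neg_one_le_cos (2 * π * k.val / n)]
  rw [sum_qaDensity_eq_sum_dft, sum_sq_eq_sum_normSq_dft, mul_left_comm, mul_sum]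
  refine mul_le_mul_of_nonneg_left (sum_le_sum fun k _ => ?_) (by positivity)
  rcases eq_or_ne k 0 with rfl | hk
  · rw [dft_apply_zero, ← Complex.ofReal_sum, hv]
    simp
  · refine mul_le_mul_of_nonneg_right (hmono ?_ (hIcc k) ?_) (Complex.normSq_nonneg _)
    · constructor <;> linarith [Real.cos_le_one (2 * π / n), Real.neg_one_le_cos (2 * π / n)]
    · linarith [re_stdAddChar_le hk]

end Form

variable {pF p2F rF r2F rrF rr2F g1 g2 : ℝ}

theorem forall_sum_qaDensity_pos_iff (hn : 1 < n) {e : ℝ} (he : e ≠ 0)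
    (hmono : MonotoneOn (lamF pF p2F rF r2F rrF rr2F g1 g2) (Set.Icc 0 4)) :
    (∀ v : ZMod n → ℝ, ∑ x, v x = 0 → v ≠ 0 →
        0 < ∑ x, qaDensity pF p2F rF r2F rrF rr2F g1 g2 (bwdDiff e v) x)
      ↔ 0 < lamF pF p2F rF r2F rrF rr2F g1 g2 (2 - 2 * Real.cos (2 * π / n)) := by
  constructor
  · intro h
    have hne : (fun x : ZMod n => (stdAddChar x).re) ≠ 0 := fun h0 => by
      simpa using congrFun h0 0
    have hpos := h _ (sum_re_stdAddChar hn) hne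
    rw [(isLapEigen_re_stdAddChar.bwdDiff e).sum_qaDensity] at hpos
    exact pos_of_mul_pos_left hpos (sum_nonneg fun x _ => sq_nonneg _)
  · intro hlam v hv hv0
    obtain ⟨x, hx⟩ := Function.ne_iff.1 (bwdDiff_ne_zero he hv hv0)
    have hsq : 0 < ∑ x, bwdDiff e v x ^ 2 :=
      sum_pos' (fun _ _ => sq_nonneg _) ⟨x, mem_univ x, sq_pos_of_ne_zero hx⟩
    exact (mul_pos hlam hsq).trans_le (lamF_mul_sum_sq_le_sum_qaDensity hmono (sum_bwdDiff e v))

end ZMod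

section Bridge

variable (pF p2F rF r2F rrF rr2F g1 g2 : ℝ) (N : ℕ) [NeZero N]

lemma sum_Icc_intCast {M : Type*} [AddCommMonoid M] (g : ZMod (2 * N) → M) :
    ∑ ℓ ∈ Icc (-(N : ℤ) + 1) N, g ℓ = ∑ x, g x := by
  rw [Icc_add_one_left_eq_Ioc, ← ZMod.sum_Ioc_intCast g (-N)]
  congr 2
  push_cast
  ring

lemma Qa_intCast (v : ZMod (2 * N) → ℝ) :
    Qa N pF p2F rF r2F rrF rr2F g1 g2 (fun ℓ => v ℓ)
      = eps N * ∑ x, qaDensity pF p2F rF r2F rrF rr2F g1 g2 (bwdDiff (eps N) v) x := by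
  have hD : Dd N (fun ℓ => v ℓ) = bwdDiff (eps N) v ∘ Int.castRingHom (ZMod (2 * N)) := by
    ext ℓ
    simp [Dd, bwdDiff]
  change eps N * ∑ ℓ ∈ Icc (-(N : ℤ) + 1) N,
    qaDensity pF p2F rF r2F rrF rr2F g1 g2 (Dd N fun ℓ => v ℓ) ℓ = _
  simp only [hD, qaDensity_comp, eq_intCast, sum_Icc_intCast]

lemma inU_intCast_iff (v : ZMod (2 * N) → ℝ) : InU N (fun ℓ => v ℓ) ↔ ∑ x, v x = 0 := by
  have hper : IsPer N (fun ℓ : ℤ => v ℓ) := fun ℓ => by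
    have : ((2 * N : ℕ) : ZMod (2 * N)) = 0 := ZMod.natCast_self _
    push_cast at this ⊢
    rw [this, add_zero]
  rw [InU, and_iff_right hper, sum_Icc_intCast]

lemma eps_pos : 0 < eps N := by
  have : (1 : ℝ) ≤ N := by exact_mod_cast NeZero.one_le
  simp only [eps, Int.cast_natCast]
  positivity

lemma forall_inU_Qa_pos_iff :
    (∀ u : ℤ → ℝ, InU N u → u ≠ 0 → 0 < Qa N pF p2F rF r2F rrF rr2F g1 g2 u)
      ↔ ∀ v : ZMod (2 * N) → ℝ, ∑ x, v x = 0 → v ≠ 0 →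
          0 < ∑ x, qaDensity pF p2F rF r2F rrF rr2F g1 g2 (bwdDiff (eps N) v) x := by
  have hcomp_ne_zero : ∀ v : ZMod (2 * N) → ℝ, (fun ℓ : ℤ => v ℓ) ≠ 0 ↔ v ≠ 0 := by
    intro v
    refine not_congr ⟨fun h0 => funext fun x => ?_, fun h0 => funext fun ℓ => by simp [h0]⟩
    obtain ⟨ℓ, rfl⟩ := ZMod.intCast_surjective x
    exact congrFun h0 ℓ
  constructor
  · intro h v hv hv0
    have := h _ ((inU_intCast_iff N v).2 hv) ((hcomp_ne_zero v).2 hv0)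
    rwa [Qa_intCast, mul_pos_iff_of_pos_left (eps_pos N)] at this
  · intro h u hu hu0
    have hper : Function.Periodic u ((2 * N : ℕ) : ℤ) := fun ℓ => by simpa using hu.1 ℓ
    obtain ⟨v, rfl⟩ : ∃ v : ZMod (2 * N) → ℝ, u = fun ℓ : ℤ => v ℓ :=
      ⟨fun x => u x.val, funext fun ℓ => (hper.map_intCast_val ℓ).symm⟩
    rw [inU_intCast_iff] at hu
    rw [Qa_intCast]
    exact mul_pos (eps_pos N) (h v hu ((hcomp_ne_zero v).1 hu0))

end Bridge

theorem atomistic_sharp_stability_general (N : ℤ) (hN : 1 ≤ N)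
    (pF p2F rF r2F rrF rr2F g1 g2 : ℝ)
    (hH1c : rF ≤ 0) (hH1d : r2F ≤ 0)
    (hH1g : 0 ≤ g2)
    (hH2 : 0 ≤ BFc p2F rF r2F rr2F g1 g2) :
    (∀ u : ℤ → ℝ, InU N u → u ≠ 0 → 0 < Qa N pF p2F rF r2F rrF rr2F g1 g2 u)
    ↔ 0 < lamF pF p2F rF r2F rrF rr2F g1 g2
        (4 * Real.sin (Real.pi / (2*(N:ℝ)))^2) := by
  lift N to ℕ using (by omega)
  have : NeZero N := ⟨by omega⟩
  have hs : 4 * Real.sin (Real.pi / (2 * ((N : ℤ) : ℝ))) ^ 2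
      = 2 - 2 * Real.cos (2 * Real.pi / ((2 * N : ℕ) : ℝ)) := by
    rw [Real.sin_sq_eq_half_sub]
    push_cast
    ring_nf
  rw [hs, forall_inU_Qa_pos_iff, ZMod.forall_sum_qaDensity_pos_iff (by omega) (eps_pos N).ne'
    (monotoneOn_lamF (mul_nonneg_of_nonpos_of_nonpos hH1c hH1d) hH1g hH2)]

/-- sharp stability of the atomistic model. -/
theorem atomistic_sharp_stability (N : ℤ) (hN : 1 ≤ N)
    (pF p2F rF r2F rrF rr2F g1 g2 : ℝ)
    (hH1a : 0 < pF) (hH1b : p2F < 0) (hH1c : rF ≤ 0) (hH1d : r2F ≤ 0)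
    (hH1e : 0 ≤ rrF) (hH1f : 0 ≤ rr2F) (hH1g : 0 ≤ g2)
    (hH2 : 0 ≤ BFc p2F rF r2F rr2F g1 g2) :
    (∀ u : ℤ → ℝ, InU N u → u ≠ 0 → 0 < Qa N pF p2F rF r2F rrF rr2F g1 g2 u)
    ↔ 0 < lamF pF p2F rF r2F rrF rr2F g1 g2
        (4 * Real.sin (Real.pi / (2*(N:ℝ)))^2) :=
  atomistic_sharp_stability_general N hN pF p2F rF r2F rrF rr2F g1 g2 hH1c hH1d hH1g hH2
end
end

section
/- Let ũ be the sequence ũ_ℓ := (−1)^ℓ ε/(2√2). Then ũ ∈ U, ‖Dũ‖²_{ℓ²ε} = 1, and Q^a(ũ) = φ''_F + 2G'_F ρ''_F. -/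
open Finset

noncomputable section

/-!
The discrete derivative of `ũ` is `(-1)^ℓ / √2`: it has constant square `1/2` and any two
consecutive values cancel. Hence every `ρ'`-term and every `2F`-term of `Q^a` vanishes, each
summand of `Q^a` equals `(2 G'_F ρ''_F + φ''_F) / 2`, and summing `2N` equal terms with weight
`ε = 1/N` doubles them. The zero mean comes from the involution `ℓ ↦ 1 - ℓ` of `{-N+1, …, N}`,
which flips the sign of `(-1)^ℓ`.
-/

section NegOneZPow

variable {α : Type*} [DivisionMonoid α] [HasDistribNeg α]

theorem neg_one_zpow_add_one (ℓ : ℤ) : (-1 : α) ^ (ℓ + 1) = -(-1) ^ ℓ := by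
  simp only [neg_one_zpow_eq_ite, Int.even_add_one]
  split_ifs <;> simp

theorem neg_one_zpow_sub_one (ℓ : ℤ) : (-1 : α) ^ (ℓ - 1) = -(-1) ^ ℓ := by
  simp only [neg_one_zpow_eq_ite, Int.even_sub_one]
  split_ifs <;> simp

theorem neg_one_zpow_one_sub (ℓ : ℤ) : (-1 : α) ^ (1 - ℓ) = -(-1) ^ ℓ := by
  simp only [neg_one_zpow_eq_ite, Int.even_sub, Int.not_even_one, false_iff]
  split_ifs <;> simp_all

theorem neg_one_zpow_add_two_mul (ℓ N : ℤ) : (-1 : α) ^ (ℓ + 2 * N) = (-1) ^ ℓ := by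
  simp [neg_one_zpow_eq_ite, Int.even_add]

theorem neg_one_zpow_sq (ℓ : ℤ) : ((-1 : α) ^ ℓ) ^ 2 = 1 := by
  rw [neg_one_zpow_eq_ite]
  split_ifs <;> simp

end NegOneZPow

theorem sum_Icc_neg_one_zpow {α : Type*} [DivisionRing α] (N : ℤ) :
    ∑ ℓ ∈ Icc (-N + 1) N, (-1 : α) ^ ℓ = 0 :=
  sum_involution (fun ℓ _ => 1 - ℓ)
    (fun ℓ _ => by rw [neg_one_zpow_one_sub, add_neg_cancel])
    (fun ℓ _ _ => by omega)
    (fun ℓ hℓ => by simp only [mem_Icc] at hℓ ⊢; omega)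
    (fun ℓ _ => sub_sub_cancel 1 ℓ)

section Alternating

variable (N : ℤ)

theorem inU_neg_one_zpow_mul (c : ℝ) : InU N (fun ℓ => (-1 : ℝ) ^ ℓ * c) :=
  ⟨fun ℓ => by simp only [neg_one_zpow_add_two_mul],
    by rw [← sum_mul, sum_Icc_neg_one_zpow, zero_mul]⟩

theorem Dd_neg_one_zpow_mul (c : ℝ) (ℓ : ℤ) :
    Dd N (fun ℓ => (-1 : ℝ) ^ ℓ * c) ℓ = (-1) ^ ℓ * (2 * c / eps N) := by
  simp only [Dd, neg_one_zpow_sub_one]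
  ring

variable {N}

theorem eps_mul_sum_Icc_const (hN : 0 < N) (a : ℝ) :
    eps N * ∑ _ℓ ∈ Icc (-N + 1) N, a = 2 * a := by
  have hcard : ((N + 1 - (-N + 1)).toNat : ℝ) = 2 * N := by
    rw [show N + 1 - (-N + 1) = 2 * N by ring]
    exact_mod_cast Int.toNat_of_nonneg (by omega)
  have hN' : (N : ℝ) ≠ 0 := by exact_mod_cast hN.ne'
  rw [sum_const, Int.card_Icc, nsmul_eq_mul, hcard, eps]
  field_simp

theorem nrm2_of_forall_sq_eq (hN : 0 < N) {v : ℤ → ℝ} {a : ℝ} (hv : ∀ ℓ, v ℓ ^ 2 = a) :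
    nrm2 N v = 2 * a := by
  rw [nrm2, sum_congr rfl fun ℓ _ => hv ℓ, eps_mul_sum_Icc_const hN]

theorem Qa_of_Dd_eq_neg_one_zpow_mul (hN : 0 < N) (pF p2F rF r2F rrF rr2F g1 g2 : ℝ)
    {u : ℤ → ℝ} {d : ℝ} (hu : ∀ ℓ, Dd N u ℓ = (-1) ^ ℓ * d) :
    Qa N pF p2F rF r2F rrF rr2F g1 g2 u = 2 * ((2 * g1 * rrF + pF) * d ^ 2) := by
  rw [Qa, ← eps_mul_sum_Icc_const hN]
  congr 1
  refine sum_congr rfl fun ℓ _ => ?_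
  have h2 : (-1 : ℝ) ^ (ℓ + 2) = (-1) ^ ℓ := by
    rw [show ℓ + 2 = ℓ + 1 + 1 by ring, neg_one_zpow_add_one, neg_one_zpow_add_one, neg_neg]
  simp only [hu, h2, neg_one_zpow_add_one, neg_one_zpow_sub_one]
  linear_combination (2 * g1 * rrF + pF) * d ^ 2 * neg_one_zpow_sq (α := ℝ) ℓ

end Alternating

/-- the oscillatory displacement `ũ_ℓ = (-1)^ℓ ε/(2√2)`. -/
theorem oscillatory_test_function (N : ℤ) (hN : 1 ≤ N)
    (pF p2F rF r2F rrF rr2F g1 g2 : ℝ) :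
    InU N (fun ℓ : ℤ => (-1:ℝ)^ℓ * eps N / (2 * Real.sqrt 2)) ∧
    nrm2 N (Dd N (fun ℓ : ℤ => (-1:ℝ)^ℓ * eps N / (2 * Real.sqrt 2))) = 1 ∧
    Qa N pF p2F rF r2F rrF rr2F g1 g2 (fun ℓ : ℤ => (-1:ℝ)^ℓ * eps N / (2 * Real.sqrt 2)) = pF + 2*g1*rrF := by
  have hN0 : 0 < N := by omega
  have hε : eps N ≠ 0 := by simp only [eps, one_div, ne_eq, inv_eq_zero, Int.cast_eq_zero]; omega
  set c := eps N / (2 * Real.sqrt 2)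
  have hu : (fun ℓ : ℤ => (-1:ℝ)^ℓ * eps N / (2 * Real.sqrt 2)) = fun ℓ => (-1) ^ ℓ * c :=
    funext fun ℓ => mul_div_assoc _ _ _
  have hd : (2 * c / eps N) ^ 2 = 1 / 2 := by
    simp only [c, div_pow, mul_pow, Real.sq_sqrt zero_le_two]
    field_simp
  have hD := Dd_neg_one_zpow_mul N c
  rw [hu]
  refine ⟨inU_neg_one_zpow_mul N c, ?_, ?_⟩
  · rw [nrm2_of_forall_sq_eq hN0 fun ℓ => by rw [hD, mul_pow, neg_one_zpow_sq, one_mul], hd]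
    norm_num
  · rw [Qa_of_Dd_eq_neg_one_zpow_mul hN0 pF p2F rF r2F rrF rr2F g1 g2 hD, hd]
    ring
end
end
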